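/- Fix positive integers N and j. Let (ε_{i,k}), for i = 1,…,N and k = 1,…,j, be independent identically distributed random variables on a probability space, each taking the value 1 with probability 1/2 and the value −1 with probability 1/2. For each i set S_i = Σ_{k=1}^{j} ε_{i,k} (so S_i is the displacement after j steps of the i-th independent sample path of the symmetric ±1 random walk). Then for every real number ε with 0 < ε and ε²·N < j, one has P( | (1/N) Σ_{i=1}^{N} S_i | ≥ ε ) ≥ (1/3) · (1 − ε²·N/j)². -/

import Mathlib

open MeasureTheory ProbabilityTheory

/-! Let `T` be the sum of all `n = N j` signs. Adding an independent sign `Y` to a sum `S` kills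
every term that is odd in `Y`, since `Y² = 1` and `𝔼 Y = 0`; so `𝔼 (S + Y)² = 𝔼 S² + 1` and
`𝔼 (S + Y)⁴ = 𝔼 S⁴ + 6 𝔼 S² + 1`, whence `𝔼 T² = n` and `𝔼 T⁴ ≤ 3 n²` by induction. The
Paley–Zygmund inequality `(𝔼 Z - c)² ≤ 𝔼 Z² · ℙ(Z > c)` for `Z = T²` and `c = ε² N²` then gives
`ℙ(|T / N| ≥ ε) ≥ (n - c)² / (3 n²)`. -/

section

variable {Ω : Type*} [MeasurableSpace Ω] {μ : Measure Ω}

section Rademacher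

variable [IsProbabilityMeasure μ] {X : Ω → ℝ}

theorem ae_eq_one_or_eq_neg_one_of_measure_eq_half (hX : Measurable X)
    (h1 : μ {ω | X ω = 1} = 1 / 2) (h2 : μ {ω | X ω = -1} = 1 / 2) :
    ∀ᵐ ω ∂μ, X ω = 1 ∨ X ω = -1 := by
  have hA : MeasurableSet {ω | X ω = 1} := hX (measurableSet_singleton 1)
  have hB : MeasurableSet {ω | X ω = -1} := hX (measurableSet_singleton (-1))
  have hdisj : Disjoint {ω | X ω = 1} {ω | X ω = -1} :=
    Set.disjoint_left.2 fun ω (h : X ω = 1) (h' : X ω = -1) => by norm_num [h] at h'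
  refine (ae_iff_measure_eq (p := fun ω => X ω = 1 ∨ X ω = -1)
    (hA.union hB).nullMeasurableSet).2 ?_
  rw [Set.ofPred_or, measure_union hdisj hB, h1, h2, ENNReal.add_halves, measure_univ]

theorem ae_sq_eq_one_of_measure_eq_half (hX : Measurable X)
    (h1 : μ {ω | X ω = 1} = 1 / 2) (h2 : μ {ω | X ω = -1} = 1 / 2) :
    ∀ᵐ ω ∂μ, X ω ^ 2 = 1 := by
  filter_upwards [ae_eq_one_or_eq_neg_one_of_measure_eq_half hX h1 h2] with ω h
  rcases h with h | h <;> simp [h]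

theorem integral_eq_zero_of_measure_eq_half (hX : Measurable X)
    (h1 : μ {ω | X ω = 1} = 1 / 2) (h2 : μ {ω | X ω = -1} = 1 / 2) :
    ∫ ω, X ω ∂μ = 0 := by
  have hA : MeasurableSet {ω | X ω = 1} := hX (measurableSet_singleton 1)
  have hB : MeasurableSet {ω | X ω = -1} := hX (measurableSet_singleton (-1))
  have hX_eq : X =ᵐ[μ]
      fun ω => {ω | X ω = 1}.indicator 1 ω - {ω | X ω = -1}.indicator 1 ω := by
    filter_upwards [ae_eq_one_or_eq_neg_one_of_measure_eq_half hX h1 h2] with ω h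
    rcases h with h | h <;> norm_num [Set.indicator_apply, h]
  rw [integral_congr_ae hX_eq, integral_sub ((integrable_const 1).indicator hA)
    ((integrable_const 1).indicator hB), integral_indicator_one hA, integral_indicator_one hB,
    measureReal_def, measureReal_def, h1, h2, sub_self]

end Rademacher

section PaleyZygmund

theorem sq_integral_mul_le_integral_sq_mul_integral_sq {f g : Ω → ℝ}
    (hf : MemLp f 2 μ) (hg : MemLp g 2 μ) :
    (∫ ω, f ω * g ω ∂μ) ^ 2 ≤ (∫ ω, f ω ^ 2 ∂μ) * ∫ ω, g ω ^ 2 ∂μ := by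
  have inner_toLp : ∀ {u v : Ω → ℝ} (hu : MemLp u 2 μ) (hv : MemLp v 2 μ),
      inner ℝ (hu.toLp u) (hv.toLp v) = ∫ ω, u ω * v ω ∂μ := by
    intro u v hu hv
    rw [L2.inner_def]
    refine integral_congr_ae ?_
    filter_upwards [hu.coeFn_toLp, hv.coeFn_toLp] with ω hu hv
    simp [hu, hv, mul_comm]
  have h := real_inner_mul_inner_self_le (hf.toLp f) (hg.toLp g)
  rw [inner_toLp hf hg, inner_toLp hf hf, inner_toLp hg hg] at h
  simpa [sq] using h

theorem sq_integral_sub_le_integral_sq_mul_measureReal_lt [IsProbabilityMeasure μ]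
    {Z : Ω → ℝ} (hZm : Measurable Z) (hZ : MemLp Z 2 μ) {c : ℝ} (hc : 0 ≤ c)
    (hcZ : c ≤ ∫ ω, Z ω ∂μ) :
    (∫ ω, Z ω ∂μ - c) ^ 2 ≤ (∫ ω, Z ω ^ 2 ∂μ) * μ.real {ω | c < Z ω} := by
  set A := {ω | c < Z ω}
  have hA : MeasurableSet A := measurableSet_lt measurable_const hZm
  have h1A : MemLp (A.indicator (1 : Ω → ℝ)) 2 μ :=
    memLp_indicator_const 2 hA (1 : ℝ) (Or.inr (measure_ne_top μ A))
  have hZ_le : ∀ ω, Z ω ≤ c + Z ω * A.indicator 1 ω := by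
    intro ω
    by_cases hω : ω ∈ A
    · simp [hω, hc]
    · simpa [hω] using not_lt.1 hω
  have hmean : ∫ ω, Z ω ∂μ - c ≤ ∫ ω, Z ω * A.indicator 1 ω ∂μ := by
    have hint : Integrable (fun ω => Z ω * A.indicator 1 ω) μ := hZ.integrable_mul h1A
    have h := integral_mono (hZ.integrable one_le_two) ((integrable_const c).fun_add hint) hZ_le
    rw [integral_add (integrable_const c) hint, integral_const, probReal_univ, one_smul] at h
    linarith
  have h1A_sq : ∫ ω, A.indicator 1 ω ^ 2 ∂μ = μ.real A := by
    have hsq : ∀ ω, A.indicator (1 : Ω → ℝ) ω ^ 2 = A.indicator 1 ω := fun ω => by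
      by_cases hω : ω ∈ A <;> simp [hω]
    simp_rw [hsq, integral_indicator_one hA]
  calc (∫ ω, Z ω ∂μ - c) ^ 2 ≤ (∫ ω, Z ω * A.indicator 1 ω ∂μ) ^ 2 :=
        pow_le_pow_left₀ (sub_nonneg.2 hcZ) hmean 2
    _ ≤ (∫ ω, Z ω ^ 2 ∂μ) * ∫ ω, A.indicator 1 ω ^ 2 ∂μ :=
        sq_integral_mul_le_integral_sq_mul_integral_sq hZ h1A
    _ = (∫ ω, Z ω ^ 2 ∂μ) * μ.real A := by rw [h1A_sq]

end PaleyZygmund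

section IndepStep

variable {S Y : Ω → ℝ} {C : ℝ}

theorem ProbabilityTheory.IndepFun.integral_pow_mul_eq_zero (hind : IndepFun S Y μ)
    (hS : Measurable S) (hY : Measurable Y) (hY0 : ∫ ω, Y ω ∂μ = 0) (k : ℕ) :
    ∫ ω, S ω ^ k * Y ω ∂μ = 0 := by
  have h := (hind.comp (measurable_id.pow_const k) measurable_id)
    |>.integral_fun_mul_eq_mul_integral (hS.pow_const k).aestronglyMeasurable
      hY.aestronglyMeasurable
  simpa [Function.comp_def, hY0] using h

theorem integrable_pow_of_ae_abs_le [IsFiniteMeasure μ] (hS : Measurable S)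
    (hSC : ∀ᵐ ω ∂μ, |S ω| ≤ C) (k : ℕ) :
    Integrable (fun ω => S ω ^ k) μ := by
  refine Integrable.of_bound (hS.pow_const k).aestronglyMeasurable (C ^ k) ?_
  filter_upwards [hSC] with ω h
  rw [Real.norm_eq_abs, abs_pow]
  exact pow_le_pow_left₀ (abs_nonneg _) h k

theorem integrable_pow_mul_of_ae_abs_le [IsFiniteMeasure μ] (hS : Measurable S)
    (hSC : ∀ᵐ ω ∂μ, |S ω| ≤ C) (hY : Measurable Y) (hY2 : ∀ᵐ ω ∂μ, Y ω ^ 2 = 1) (k : ℕ) :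
    Integrable (fun ω => S ω ^ k * Y ω) μ := by
  refine (integrable_pow_of_ae_abs_le hS hSC k).mul_bdd hY.aestronglyMeasurable (c := 1) ?_
  filter_upwards [hY2] with ω h
  rw [Real.norm_eq_abs, ← sq_le_one_iff_abs_le_one, h]

theorem integral_add_sq_of_indepFun [IsProbabilityMeasure μ] (hind : IndepFun S Y μ)
    (hS : Measurable S) (hSC : ∀ᵐ ω ∂μ, |S ω| ≤ C) (hY : Measurable Y) (hY2 : ∀ᵐ ω ∂μ, Y ω ^ 2 = 1)
    (hY0 : ∫ ω, Y ω ∂μ = 0) :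
    ∫ ω, (S ω + Y ω) ^ 2 ∂μ = ∫ ω, S ω ^ 2 ∂μ + 1 := by
  have hexp : (fun ω => (S ω + Y ω) ^ 2) =ᵐ[μ]
      fun ω => S ω ^ 2 + 1 + 2 * (S ω ^ 1 * Y ω) := by
    filter_upwards [hY2] with ω h
    linear_combination h
  rw [integral_congr_ae hexp, integral_add ((integrable_pow_of_ae_abs_le hS hSC 2).fun_add
      (integrable_const 1)) ((integrable_pow_mul_of_ae_abs_le hS hSC hY hY2 1).const_mul 2),
    integral_add (integrable_pow_of_ae_abs_le hS hSC 2) (integrable_const 1), integral_const_mul,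
    hind.integral_pow_mul_eq_zero hS hY hY0]
  simp

theorem integral_add_pow_four_of_indepFun [IsProbabilityMeasure μ] (hind : IndepFun S Y μ)
    (hS : Measurable S) (hSC : ∀ᵐ ω ∂μ, |S ω| ≤ C) (hY : Measurable Y) (hY2 : ∀ᵐ ω ∂μ, Y ω ^ 2 = 1)
    (hY0 : ∫ ω, Y ω ∂μ = 0) :
    ∫ ω, (S ω + Y ω) ^ 4 ∂μ = ∫ ω, S ω ^ 4 ∂μ + 6 * ∫ ω, S ω ^ 2 ∂μ + 1 := by
  have hexp : (fun ω => (S ω + Y ω) ^ 4) =ᵐ[μ] fun ω =>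
      S ω ^ 4 + 6 * S ω ^ 2 + 1 + (4 * (S ω ^ 3 * Y ω) + 4 * (S ω ^ 1 * Y ω)) := by
    filter_upwards [hY2] with ω h
    linear_combination (6 * S ω ^ 2 + 4 * S ω * Y ω + Y ω ^ 2 + 1) * h
  have hint := integrable_pow_of_ae_abs_le hS hSC (μ := μ)
  have hintY := integrable_pow_mul_of_ae_abs_le hS hSC hY hY2
  rw [integral_congr_ae hexp, integral_add (((hint 4).fun_add ((hint 2).const_mul 6)).fun_add
      (integrable_const 1)) (((hintY 3).const_mul 4).fun_add ((hintY 1).const_mul 4)),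
    integral_add ((hint 4).fun_add ((hint 2).const_mul 6)) (integrable_const 1),
    integral_add (hint 4) ((hint 2).const_mul 6),
    integral_add ((hintY 3).const_mul 4) ((hintY 1).const_mul 4),
    integral_const_mul, integral_const_mul, integral_const_mul,
    hind.integral_pow_mul_eq_zero hS hY hY0, hind.integral_pow_mul_eq_zero hS hY hY0]
  simp

end IndepStep

section IndepSum

variable {ι : Type*} {Y : ι → Ω → ℝ}

theorem ae_abs_sum_le_card (hY2 : ∀ i, ∀ᵐ ω ∂μ, Y i ω ^ 2 = 1) (s : Finset ι) :
    ∀ᵐ ω ∂μ, |∑ i ∈ s, Y i ω| ≤ s.card := by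
  have hY2s : ∀ᵐ ω ∂μ, ∀ i ∈ s, Y i ω ^ 2 = 1 := (ae_ball_iff s.countable_toSet).2 fun i _ => hY2 i
  filter_upwards [hY2s] with ω h
  calc |∑ i ∈ s, Y i ω| ≤ ∑ i ∈ s, |Y i ω| := Finset.abs_sum_le_sum_abs _ _
    _ ≤ ∑ i ∈ s, 1 := Finset.sum_le_sum fun i hi => (sq_le_one_iff_abs_le_one _).1 (h i hi).le
    _ = s.card := by simp

variable [IsProbabilityMeasure μ]

theorem integral_sum_sq_eq_card (hY : ∀ i, Measurable (Y i)) (hindep : iIndepFun Y μ)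
    (hY2 : ∀ i, ∀ᵐ ω ∂μ, Y i ω ^ 2 = 1) (hY0 : ∀ i, ∫ ω, Y i ω ∂μ = 0) (s : Finset ι) :
    ∫ ω, (∑ i ∈ s, Y i ω) ^ 2 ∂μ = s.card := by
  classical
  induction s using Finset.induction_on with
  | empty => simp
  | insert a s ha ih =>
    have hind := hindep.indepFun_finsetSum_of_notMem hY ha
    rw [Finset.sum_fn] at hind
    simp_rw [Finset.sum_insert ha, add_comm (Y a _)]
    rw [integral_add_sq_of_indepFun hind (Finset.measurable_fun_sum s fun i _ => hY i)
      (ae_abs_sum_le_card hY2 s) (hY a) (hY2 a) (hY0 a), ih, Finset.card_insert_of_notMem ha]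
    push_cast; ring

theorem integral_sum_pow_four_le (hY : ∀ i, Measurable (Y i)) (hindep : iIndepFun Y μ)
    (hY2 : ∀ i, ∀ᵐ ω ∂μ, Y i ω ^ 2 = 1) (hY0 : ∀ i, ∫ ω, Y i ω ∂μ = 0) (s : Finset ι) :
    ∫ ω, (∑ i ∈ s, Y i ω) ^ 4 ∂μ ≤ 3 * (s.card : ℝ) ^ 2 := by
  classical
  induction s using Finset.induction_on with
  | empty => simp
  | insert a s ha ih =>
    have hind := hindep.indepFun_finsetSum_of_notMem hY ha
    rw [Finset.sum_fn] at hind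
    simp_rw [Finset.sum_insert ha, add_comm (Y a _)]
    rw [integral_add_pow_four_of_indepFun hind (Finset.measurable_fun_sum s fun i _ => hY i)
      (ae_abs_sum_le_card hY2 s) (hY a) (hY2 a) (hY0 a),
      integral_sum_sq_eq_card hY hindep hY2 hY0, Finset.card_insert_of_notMem ha]
    push_cast
    nlinarith

theorem sq_card_sub_le_mul_measureReal_lt_sq_sum [Fintype ι] (hY : ∀ i, Measurable (Y i))
    (hindep : iIndepFun Y μ) (hY2 : ∀ i, ∀ᵐ ω ∂μ, Y i ω ^ 2 = 1)
    (hY0 : ∀ i, ∫ ω, Y i ω ∂μ = 0) {c : ℝ} (hc : 0 ≤ c) (hcn : c ≤ Fintype.card ι) :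
    (Fintype.card ι - c) ^ 2
      ≤ 3 * (Fintype.card ι : ℝ) ^ 2 * μ.real {ω | c < (∑ i, Y i ω) ^ 2} := by
  have hT : Measurable fun ω => ∑ i, Y i ω := Finset.measurable_fun_sum _ fun i _ => hY i
  have hT2 : ∫ ω, (∑ i, Y i ω) ^ 2 ∂μ = Fintype.card ι :=
    integral_sum_sq_eq_card hY hindep hY2 hY0 Finset.univ
  have hT4 := integral_sum_pow_four_le hY hindep hY2 hY0 Finset.univ
  have hT2_memLp : MemLp (fun ω => (∑ i, Y i ω) ^ 2) 2 μ := by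
    refine (memLp_two_iff_integrable_sq (hT.pow_const 2).aestronglyMeasurable).2 ?_
    simpa [← pow_mul] using integrable_pow_of_ae_abs_le hT (ae_abs_sum_le_card hY2 _) 4
  have hpz := sq_integral_sub_le_integral_sq_mul_measureReal_lt (hT.pow_const 2) hT2_memLp hc
    (hT2 ▸ hcn)
  simp only [hT2, ← pow_mul, Nat.reduceMul] at hpz
  rw [Finset.card_univ] at hT4
  nlinarith [measureReal_nonneg (μ := μ) (s := {ω | c < (∑ i, Y i ω) ^ 2})]

end IndepSum

end

theorem random_walk_average_anticoncentration_general
    {Ω : Type*} [MeasurableSpace Ω] (μ : Measure Ω) [IsProbabilityMeasure μ]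
    (N j : ℕ) (hN : 0 < N)
    (X : Fin N → Fin j → Ω → ℝ)
    (hmeas : ∀ i k, Measurable (X i k))
    (hindep : iIndepFun
      (fun (p : Fin N × Fin j) ω => X p.1 p.2 ω) μ)
    (hdist1 : ∀ i k, μ {ω | X i k ω = 1} = 1/2)
    (hdist2 : ∀ i k, μ {ω | X i k ω = -1} = 1/2)
    (ε : ℝ) (hlt : ε ^ 2 * N < j) :
    ENNReal.ofReal ((1/3) * (1 - ε ^ 2 * N / j) ^ 2)
      ≤ μ {ω | ε ≤ |(∑ i : Fin N, ∑ k : Fin j, X i k ω) / N|} := by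
  set Y : Fin N × Fin j → Ω → ℝ := fun p ω => X p.1 p.2 ω
  have hY : ∀ p, Measurable (Y p) := fun p => hmeas p.1 p.2
  have hY2 : ∀ p, ∀ᵐ ω ∂μ, Y p ω ^ 2 = 1 := fun p =>
    ae_sq_eq_one_of_measure_eq_half (hY p) (hdist1 p.1 p.2) (hdist2 p.1 p.2)
  have hY0 : ∀ p, ∫ ω, Y p ω ∂μ = 0 := fun p =>
    integral_eq_zero_of_measure_eq_half (hY p) (hdist1 p.1 p.2) (hdist2 p.1 p.2)
  have hNpos : (0 : ℝ) < N := by exact_mod_cast hN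
  have hjpos : (0 : ℝ) < j := lt_of_le_of_lt (by positivity) hlt
  set c : ℝ := ε ^ 2 * N ^ 2
  have hcard : (Fintype.card (Fin N × Fin j) : ℝ) = N * j := by simp
  have hpz := sq_card_sub_le_mul_measureReal_lt_sq_sum hY hindep hY2 hY0
    (by positivity : 0 ≤ c) (by rw [hcard]; nlinarith)
  rw [hcard] at hpz
  have hsub : {ω | c < (∑ p, Y p ω) ^ 2}
      ⊆ {ω | ε ≤ |(∑ i : Fin N, ∑ k : Fin j, X i k ω) / N|} := by
    intro ω (hω : c < (∑ p, Y p ω) ^ 2)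
    have hεT : |ε * N| < |∑ p, Y p ω| := sq_lt_sq.1 (by simpa [c, mul_pow] using hω)
    rw [Set.mem_ofPred_eq, ← Fintype.sum_prod_type', abs_div, Nat.abs_cast, le_div_iff₀ hNpos]
    exact (le_abs_self _).trans hεT.le
  rw [ENNReal.ofReal_le_iff_le_toReal (measure_ne_top _ _), ← measureReal_def]
  calc 1 / 3 * (1 - ε ^ 2 * N / j) ^ 2 = (N * j - c) ^ 2 / (3 * (N * j) ^ 2) := by
        simp only [c]
        field_simp
    _ ≤ μ.real {ω | c < (∑ p, Y p ω) ^ 2} := by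
        rw [div_le_iff₀ (by positivity)]
        linarith
    _ ≤ _ := measureReal_mono hsub

/-- Anti-concentration lower bound for the empirical average of the endpoints of `N`
independent `j`-step symmetric `±1` random walks (Lemma 1 with constant `C = 1/3`). -/
theorem random_walk_average_anticoncentration
    {Ω : Type*} [MeasurableSpace Ω] (μ : Measure Ω) [IsProbabilityMeasure μ]
    (N j : ℕ) (hN : 0 < N) (hj : 0 < j)
    (X : Fin N → Fin j → Ω → ℝ)
    (hmeas : ∀ i k, Measurable (X i k))
    (hindep : iIndepFun
      (fun (p : Fin N × Fin j) ω => X p.1 p.2 ω) μ)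
    (hdist1 : ∀ i k, μ {ω | X i k ω = 1} = 1/2)
    (hdist2 : ∀ i k, μ {ω | X i k ω = -1} = 1/2)
    (ε : ℝ) (hε : 0 < ε) (hlt : ε ^ 2 * N < j) :
    ENNReal.ofReal ((1/3) * (1 - ε ^ 2 * N / j) ^ 2)
      ≤ μ {ω | ε ≤ |(∑ i : Fin N, ∑ k : Fin j, X i k ω) / N|} :=
  random_walk_average_anticoncentration_general μ N j hN X hmeas hindep hdist1 hdist2 ε hlt
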